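/- Let (V,c,p) be an instance of Asymmetric A Priori TSP with p(V) := Σ_{v∈V} p(v) > 0. Then there exists a vertex d ∈ V such that, defining p' : V → [0,1] by p'(d) = 1 and p'(v) = p(v) for v ≠ d, the following two inequalities hold: (i) E_{A∼p}[c(T[A])] ≤ E_{A∼p'}[c(T[A])] for every tour T on V, and (ii) E_{A∼p'}[TSP(A,c)] ≤ 2·(1 + 1/p(V)) · E_{A∼p}[TSP(A,c)]. -/

import Mathlib

noncomputable section

/-- The cost of a tour given as a cyclic list: the sum of `c` over consecutive pairs
(cyclically). -/
def cycCost {V : Type*} (c : V → V → ℝ) (l : List V) : ℝ :=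
  (List.zipWith c l (l.rotate 1)).sum

/-- `l` is a tour on the finite set `A`: a cyclic ordering of `A`, visiting each element
exactly once. -/
def IsTour {V : Type*} [DecidableEq V] (A : Finset V) (l : List V) : Prop :=
  l.Nodup ∧ l.toFinset = A

/-- Short-cutting a tour to the set `A` of active vertices. -/
def shortcut {V : Type*} [DecidableEq V] (l : List V) (A : Finset V) : List V :=
  l.filter (fun v => v ∈ A)

/-- The expectation of `f` over the random set of active vertices, where each vertex `v`
is active independently with probability `p v`. -/
def apExpect {V : Type*} [Fintype V] [DecidableEq V] (p : V → ℝ) (f : Finset V → ℝ) : ℝ :=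
  ∑ A : Finset V, (∏ v ∈ A, p v) * (∏ v ∈ Aᶜ, (1 - p v)) * f A

/-- The minimum cost of a tour on `A` with respect to `c`. -/
def TSP {V : Type*} [DecidableEq V] (c : V → V → ℝ) (A : Finset V) : ℝ :=
  sInf {x : ℝ | ∃ l : List V, IsTour A l ∧ x = cycCost c l}

/-!
Forcing a vertex `d` to be active only enlarges the random set, and shortcutting a tour never
increases its cost, so (i) holds for every `d`. For (ii) we average over `d` with weights `p d`.
Since `E_{p[d ↦ 1]}[f] = E_p[f(A ∪ {d})]` and `E_p[f(A) ; d ∈ A] = p d · E_p[f(A ∪ {d})]`, the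
weighted sum `∑_d p d · E_{p[d ↦ 1]}[TSP]` equals `E_p[|A| · TSP(A)]`. Optimal tours of `A ∖ {d}`
and `A ∖ {d'}` share a third vertex when `|A| ≥ 3`; glued there they give a closed walk through `A`,
so `TSP(A) ≤ TSP(A ∖ {d}) + TSP(A ∖ {d'})`. Summing over ordered pairs,
`(|A| - 2) · TSP(A) ≤ 2 ∑_{d ∈ A} TSP(A ∖ {d})`, and as `TSP(A ∖ {d}) ≤ TSP(A)` the weighted sum is
at most `2 (1 + p(V)) · E_p[TSP]`. Some `d` does no worse than the weighted average.
-/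

open Finset

section Cost

variable {V : Type*} (c : V → V → ℝ)

def pathCost (x : V) (l : List V) (y : V) : ℝ :=
  (List.zipWith c (x :: l) (l ++ [y])).sum

@[simp]
lemma pathCost_nil (x y : V) : pathCost c x [] y = c x y := by
  simp [pathCost]

@[simp]
lemma pathCost_cons (x a : V) (l : List V) (y : V) :
    pathCost c x (a :: l) y = c x a + pathCost c a l y := by
  simp [pathCost]

lemma pathCost_append_cons (x y z : V) (l₁ l₂ : List V) :
    pathCost c x (l₁ ++ y :: l₂) z = pathCost c x l₁ y + pathCost c y l₂ z := by
  induction l₁ generalizing x with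
  | nil => simp
  | cons a l ih => simp [ih, add_assoc]

lemma cycCost_cons (x : V) (l : List V) : cycCost c (x :: l) = pathCost c x l x := by
  simp [cycCost, pathCost]

lemma pathCost_nonneg (hc0 : ∀ x y, 0 ≤ c x y) (x : V) (l : List V) (y : V) :
    0 ≤ pathCost c x l y := by
  induction l generalizing x with
  | nil => simpa using hc0 x y
  | cons a l ih => simpa using add_nonneg (hc0 x a) (ih a)

lemma cycCost_nonneg (hc0 : ∀ x y, 0 ≤ c x y) (l : List V) : 0 ≤ cycCost c l := by
  cases l with
  | nil => simp [cycCost]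
  | cons x l => simpa [cycCost_cons] using pathCost_nonneg c hc0 x l x

lemma cycCost_rotate_one (l : List V) : cycCost c (l.rotate 1) = cycCost c l := by
  rcases l with _ | ⟨a, _ | ⟨b, l⟩⟩
  · rfl
  · simp
  · rw [List.rotate_cons_succ, List.rotate_zero, List.cons_append, cycCost_cons, cycCost_cons,
      pathCost_append_cons, pathCost_cons, pathCost_nil, add_comm]

lemma cycCost_eq_of_isRotated {l l' : List V} (h : l ~r l') : cycCost c l = cycCost c l' := by
  obtain ⟨n, rfl⟩ := h
  induction n with
  | zero => simp
  | succ n ih => rw [← List.rotate_rotate, cycCost_rotate_one, ih]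

variable {c}

lemma pathCost_le_cons (htri : ∀ x y z, c x z ≤ c x y + c y z) (x a : V) (l : List V) (y : V) :
    pathCost c x l y ≤ c x a + pathCost c a l y := by
  cases l with
  | nil => simpa using htri x a y
  | cons b l => simp only [pathCost_cons]; linarith [htri x a b]

lemma pathCost_mono (htri : ∀ x y z, c x z ≤ c x y + c y z) {l₁ l₂ : List V} (h : l₁.Sublist l₂)
    (x y : V) : pathCost c x l₁ y ≤ pathCost c x l₂ y := by
  induction h generalizing x with
  | slnil => exact le_rfl
  | cons a _ ih => exact (pathCost_le_cons htri x a _ y).trans (by simpa using ih a)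
  | cons_cons a _ ih => simpa using ih a

lemma cycCost_mono (hc0 : ∀ x y, 0 ≤ c x y) (htri : ∀ x y z, c x z ≤ c x y + c y z)
    {l₁ l₂ : List V} (h : l₁.Sublist l₂) : cycCost c l₁ ≤ cycCost c l₂ := by
  rcases l₁ with _ | ⟨b, s⟩
  · simpa [cycCost] using cycCost_nonneg c hc0 l₂
  -- rotate `l₂` so that it starts with the first vertex `b` of `l₁`
  obtain ⟨r₁, r₂, rfl, hb, hs⟩ := List.cons_sublist_iff.mp h
  obtain ⟨u, v, rfl⟩ := List.append_of_mem hb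
  have hrot : b :: (v ++ r₂ ++ u) ~r u ++ b :: v ++ r₂ := by
    simpa using (List.isRotated_append (l := u) (l' := b :: (v ++ r₂))).symm
  calc cycCost c (b :: s) = pathCost c b s b := cycCost_cons c b s
    _ ≤ pathCost c b (v ++ r₂ ++ u) b :=
      pathCost_mono htri (hs.trans ((List.sublist_append_right v r₂).trans
        (List.sublist_append_left _ u))) b b
    _ = cycCost c (u ++ b :: v ++ r₂) := by
      rw [← cycCost_cons, cycCost_eq_of_isRotated c hrot]

end Cost

section Tour

variable {V : Type*} [DecidableEq V]

lemma isTour_shortcut {A B : Finset V} {l : List V} (hl : IsTour B l) (hAB : A ⊆ B) :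
    IsTour A (shortcut l A) := by
  refine ⟨hl.1.filter _, ?_⟩
  ext v
  simp only [shortcut, List.mem_toFinset, List.mem_filter, decide_eq_true_eq]
  constructor
  · exact fun h => h.2
  · exact fun h => ⟨by rw [← List.mem_toFinset, hl.2]; exact hAB h, h⟩

lemma shortcut_sublist_shortcut (l : List V) {A B : Finset V} (hAB : A ⊆ B) :
    (shortcut l A).Sublist (shortcut l B) :=
  l.monotone_filter_right fun v hv => by simpa using hAB (by simpa using hv)

variable (c : V → V → ℝ)

lemma finite_setOf_cycCost_isTour (A : Finset V) :
    {x : ℝ | ∃ l : List V, IsTour A l ∧ x = cycCost c l}.Finite := by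
  refine ((List.finite_toSet A.toList.permutations).image (cycCost c)).subset ?_
  rintro _ ⟨l, hl, rfl⟩
  exact Set.mem_image_of_mem _ (List.mem_permutations.mpr
    (List.perm_of_nodup_nodup_toFinset_eq hl.1 A.nodup_toList (by simp [hl.2])))

lemma TSP_le_cycCost {A : Finset V} {l : List V} (hl : IsTour A l) : TSP c A ≤ cycCost c l :=
  csInf_le (finite_setOf_cycCost_isTour c A).bddBelow ⟨l, hl, rfl⟩

lemma exists_isTour_cycCost_eq_TSP (A : Finset V) :
    ∃ l, IsTour A l ∧ cycCost c l = TSP c A := by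
  have hne : {x : ℝ | ∃ l : List V, IsTour A l ∧ x = cycCost c l}.Nonempty :=
    ⟨_, A.toList, ⟨A.nodup_toList, A.toList_toFinset⟩, rfl⟩
  obtain ⟨l, hl, h⟩ := hne.csInf_mem (finite_setOf_cycCost_isTour c A)
  exact ⟨l, hl, h.symm⟩

lemma exists_isTour_cons_cycCost_eq_TSP {A : Finset V} {x : V} (hx : x ∈ A) :
    ∃ u, IsTour A (x :: u) ∧ cycCost c (x :: u) = TSP c A := by
  obtain ⟨l, hl, hcost⟩ := exists_isTour_cycCost_eq_TSP c A
  obtain ⟨s, t, rfl⟩ := List.append_of_mem (List.mem_toFinset.mp (hl.2 ▸ hx))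
  have hrot : s ++ x :: t ~r x :: (t ++ s) := List.isRotated_append
  exact ⟨t ++ s, ⟨hrot.nodup_iff.mp hl.1, (List.toFinset_eq_of_perm _ _ hrot.perm).symm.trans hl.2⟩,
    (cycCost_eq_of_isRotated c hrot).symm.trans hcost⟩

variable {c}

lemma TSP_nonneg (hc0 : ∀ x y, 0 ≤ c x y) (A : Finset V) : 0 ≤ TSP c A := by
  obtain ⟨l, -, hl⟩ := exists_isTour_cycCost_eq_TSP c A
  exact hl ▸ cycCost_nonneg c hc0 l

variable (hc0 : ∀ x y, 0 ≤ c x y) (htri : ∀ x y z, c x z ≤ c x y + c y z)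
include hc0 htri

lemma TSP_le_cycCost_of_toFinset_eq {A : Finset V} {l : List V} (hl : l.toFinset = A) :
    TSP c A ≤ cycCost c l :=
  (TSP_le_cycCost c ⟨l.nodup_dedup, by rw [← hl]; ext; simp⟩).trans
    (cycCost_mono hc0 htri l.dedup_sublist)

lemma cycCost_shortcut_monotone (T : List V) : Monotone fun A => cycCost c (shortcut T A) :=
  fun _ _ hAB => cycCost_mono hc0 htri (shortcut_sublist_shortcut T hAB)

lemma TSP_mono {A B : Finset V} (hAB : A ⊆ B) : TSP c A ≤ TSP c B := by
  obtain ⟨l, hl, hcost⟩ := exists_isTour_cycCost_eq_TSP c B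
  calc TSP c A ≤ cycCost c (shortcut l A) := TSP_le_cycCost c (isTour_shortcut hl hAB)
    _ ≤ cycCost c (shortcut l B) := cycCost_shortcut_monotone hc0 htri l hAB
    _ = TSP c B := by rw [← hcost, shortcut, List.filter_eq_self.mpr (by simp [← hl.2])]

lemma TSP_le_TSP_erase_add_TSP_erase {B : Finset V} {d d' : V} (hd : d ∈ B) (hd' : d' ∈ B)
    (hne : d ≠ d') (hB : 3 ≤ B.card) :
    TSP c B ≤ TSP c (B.erase d) + TSP c (B.erase d') := by
  have hd'B : d' ∈ B.erase d := mem_erase.mpr ⟨hne.symm, hd'⟩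
  obtain ⟨x, hx⟩ : ((B.erase d).erase d').Nonempty := by
    rw [← card_pos, card_erase_of_mem hd'B, card_erase_of_mem hd]
    omega
  have hx₁ : x ∈ B.erase d := mem_of_mem_erase hx
  have hx₂ : x ∈ B.erase d' := mem_erase.mpr ⟨ne_of_mem_erase hx, mem_of_mem_erase hx₁⟩
  obtain ⟨u₁, hu₁, hcost₁⟩ := exists_isTour_cons_cycCost_eq_TSP c hx₁
  obtain ⟨u₂, hu₂, hcost₂⟩ := exists_isTour_cons_cycCost_eq_TSP c hx₂
  have hcover : (x :: u₁ ++ x :: u₂).toFinset = B := by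
    rw [List.toFinset_append, hu₁.2, hu₂.2, union_erase_of_mem hd'B,
      union_eq_right.mpr (erase_subset d B)]
  calc TSP c B ≤ cycCost c (x :: u₁ ++ x :: u₂) := TSP_le_cycCost_of_toFinset_eq hc0 htri hcover
    _ = TSP c (B.erase d) + TSP c (B.erase d') := by
      rw [← hcost₁, ← hcost₂, List.cons_append, cycCost_cons, pathCost_append_cons,
        cycCost_cons, cycCost_cons]

lemma card_mul_TSP_le_two_mul_sum_TSP_erase {B : Finset V} (hB : 3 ≤ B.card) :
    (B.card : ℝ) * TSP c B ≤ 2 * ∑ d ∈ B, TSP c (B.erase d) := by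
  have hn : (3 : ℝ) ≤ B.card := by exact_mod_cast hB
  set n : ℝ := (B.card : ℝ)
  set S := ∑ d ∈ B, TSP c (B.erase d)
  have hcard_erase : ∀ d ∈ B, ((B.erase d).card : ℝ) = n - 1 := fun d hd => by
    rw [card_erase_of_mem hd, Nat.cast_sub (by omega), Nat.cast_one]
  have hpairs : ∑ d ∈ B, ∑ _d' ∈ B.erase d, TSP c B ≤
      ∑ d ∈ B, ∑ d' ∈ B.erase d, (TSP c (B.erase d) + TSP c (B.erase d')) :=
    sum_le_sum fun d hd => sum_le_sum fun d' hd' =>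
      TSP_le_TSP_erase_add_TSP_erase hc0 htri hd (mem_of_mem_erase hd')
        (ne_of_mem_erase hd').symm hB
  have hlhs : ∑ d ∈ B, ∑ _d' ∈ B.erase d, TSP c B = n * (n - 1) * TSP c B := by
    simp_rw [sum_const, nsmul_eq_mul]
    rw [sum_congr rfl fun d hd => by rw [hcard_erase d hd], sum_const, nsmul_eq_mul]
    ring
  have hrhs : ∑ d ∈ B, ∑ d' ∈ B.erase d, (TSP c (B.erase d) + TSP c (B.erase d')) =
      2 * (n - 1) * S := by
    rw [sum_congr rfl fun d hd => by
      rw [sum_add_distrib, sum_const, nsmul_eq_mul, hcard_erase d hd, sum_erase_eq_sub hd]]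
    rw [sum_add_distrib, sum_sub_distrib, ← mul_sum, sum_const, nsmul_eq_mul]
    ring
  rw [hlhs, hrhs] at hpairs
  nlinarith [TSP_nonneg hc0 B]

lemma card_sub_two_mul_TSP_le (B : Finset V) :
    ((B.card : ℝ) - 2) * TSP c B ≤ 2 * ∑ d ∈ B, TSP c (B.erase d) := by
  have hT := TSP_nonneg hc0 B
  rcases le_or_gt B.card 2 with hB | hB
  · have : (B.card : ℝ) ≤ 2 := by exact_mod_cast hB
    nlinarith [sum_nonneg fun d (_ : d ∈ B) => TSP_nonneg hc0 (B.erase d)]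
  · linarith [card_mul_TSP_le_two_mul_sum_TSP_erase hc0 htri hB]

end Tour

section Expectation

variable {V : Type*} [Fintype V] [DecidableEq V] (p : V → ℝ)

lemma apExpect_eq_sum_powerset_erase (d : V) (f : Finset V → ℝ) :
    apExpect p f = ∑ A ∈ (univ.erase d).powerset,
      (∏ v ∈ A, p v) * (∏ v ∈ (insert d A)ᶜ, (1 - p v)) *
        ((1 - p d) * f A + p d * f (insert d A)) := by
  have huniv : (univ : Finset (Finset V)) = (insert d (univ.erase d)).powerset := by
    rw [insert_erase (mem_univ d), powerset_univ]
  rw [apExpect, huniv, sum_powerset_insert (notMem_erase d univ), ← sum_add_distrib]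
  refine sum_congr rfl fun A hA => ?_
  have hdA : d ∉ A := fun h => notMem_erase d univ (mem_powerset.mp hA h)
  have hcompl : Aᶜ = insert d (insert d A)ᶜ := by
    rw [compl_insert, insert_erase (mem_compl.mpr hdA)]
  rw [prod_insert hdA, hcompl, prod_insert (by simp)]
  ring

lemma apExpect_update_one (d : V) (f : Finset V → ℝ) :
    apExpect (Function.update p d 1) f = apExpect p (fun A => f (insert d A)) := by
  rw [apExpect_eq_sum_powerset_erase _ d, apExpect_eq_sum_powerset_erase p d]
  refine sum_congr rfl fun A hA => ?_
  have hdA : d ∉ A := fun h => notMem_erase d univ (mem_powerset.mp hA h)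
  have hA : ∏ v ∈ A, Function.update p d 1 v = ∏ v ∈ A, p v :=
    prod_congr rfl fun v hv => Function.update_of_ne (ne_of_mem_of_not_mem hv hdA) _ _
  have hAc : ∏ v ∈ (insert d A)ᶜ, (1 - Function.update p d 1 v) = ∏ v ∈ (insert d A)ᶜ, (1 - p v) :=
    prod_congr rfl fun v hv => by
      rw [Function.update_of_ne (by rintro rfl; simp at hv)]
  rw [hA, hAc, Function.update_self, insert_idem]
  ring

lemma apExpect_ite_mem (d : V) (g : Finset V → ℝ) :
    apExpect p (fun A => if d ∈ A then g A else 0) =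
      p d * apExpect p (fun A => g (insert d A)) := by
  rw [apExpect_eq_sum_powerset_erase p d, apExpect_eq_sum_powerset_erase p d, mul_sum]
  refine sum_congr rfl fun A hA => ?_
  have hdA : d ∉ A := fun h => notMem_erase d univ (mem_powerset.mp hA h)
  simp only [hdA, mem_insert_self, if_true, if_false, insert_idem]
  ring

lemma apExpect_add (f g : Finset V → ℝ) :
    apExpect p (fun A => f A + g A) = apExpect p f + apExpect p g := by
  simp only [apExpect, mul_add, sum_add_distrib]

lemma apExpect_const_mul (a : ℝ) (f : Finset V → ℝ) :
    apExpect p (fun A => a * f A) = a * apExpect p f := by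
  simp only [apExpect, mul_sum]
  exact sum_congr rfl fun A _ => by ring

lemma apExpect_sum {ι : Type*} (s : Finset ι) (f : ι → Finset V → ℝ) :
    apExpect p (fun A => ∑ i ∈ s, f i A) = ∑ i ∈ s, apExpect p (f i) := by
  simp only [apExpect, mul_sum]
  exact sum_comm

variable {p}

lemma apExpect_mono (hp0 : ∀ v, 0 ≤ p v) (hp1 : ∀ v, p v ≤ 1) {f g : Finset V → ℝ}
    (h : ∀ A, f A ≤ g A) : apExpect p f ≤ apExpect p g :=
  sum_le_sum fun A _ => mul_le_mul_of_nonneg_left (h A) <|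
    mul_nonneg (prod_nonneg fun v _ => hp0 v) (prod_nonneg fun v _ => sub_nonneg.mpr (hp1 v))

lemma apExpect_le_apExpect_update_one (hp0 : ∀ v, 0 ≤ p v) (hp1 : ∀ v, p v ≤ 1) (d : V)
    {f : Finset V → ℝ} (hf : Monotone f) :
    apExpect p f ≤ apExpect (Function.update p d 1) f := by
  rw [apExpect_update_one]
  exact apExpect_mono hp0 hp1 fun A => hf (subset_insert d A)

end Expectation

lemma Finset.exists_le_of_sum_mul_le {ι : Type*} {s : Finset ι} {w f : ι → ℝ} {M : ℝ}
    (hw : ∀ i ∈ s, 0 ≤ w i) (hs : 0 < ∑ i ∈ s, w i)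
    (h : ∑ i ∈ s, w i * f i ≤ (∑ i ∈ s, w i) * M) : ∃ i ∈ s, f i ≤ M := by
  by_contra! hlt
  obtain ⟨i, hi, hwi⟩ := exists_lt_of_sum_lt (by simpa using hs : ∑ i ∈ s, (0 : ℝ) < ∑ i ∈ s, w i)
  have := sum_lt_sum (fun j hj => mul_le_mul_of_nonneg_left (hlt j hj).le (hw j hj))
    ⟨i, hi, mul_lt_mul_of_pos_left (hlt i hi) hwi⟩
  rw [sum_mul] at h
  linarith

section Main

variable {V : Type*} [Fintype V] [DecidableEq V] {c : V → V → ℝ} {p : V → ℝ}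

lemma sum_mul_apExpect_update_one_TSP_le (hc0 : ∀ x y, 0 ≤ c x y)
    (htri : ∀ x y z, c x z ≤ c x y + c y z) (hp0 : ∀ v, 0 ≤ p v) (hp1 : ∀ v, p v ≤ 1) :
    ∑ d, p d * apExpect (Function.update p d 1) (TSP c) ≤
      2 * (1 + ∑ v, p v) * apExpect p (TSP c) := by
  set E := apExpect p (TSP c)
  have herase : ∀ d, apExpect p (fun A => TSP c ((insert d A).erase d)) ≤ E := fun d =>
    apExpect_mono hp0 hp1 fun A =>
      TSP_mono hc0 htri (by rw [erase_insert_eq_erase]; exact erase_subset d A)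
  calc ∑ d, p d * apExpect (Function.update p d 1) (TSP c)
      = apExpect p (fun A => (A.card : ℝ) * TSP c A) := by
        simp_rw [apExpect_update_one, ← apExpect_ite_mem, ← apExpect_sum, Fintype.sum_ite_mem,
          sum_const, nsmul_eq_mul]
    _ ≤ apExpect p (fun A => 2 * TSP c A + 2 * ∑ d ∈ A, TSP c (A.erase d)) :=
        apExpect_mono hp0 hp1 fun A => by linarith [card_sub_two_mul_TSP_le hc0 htri A]
    _ = 2 * E + 2 * ∑ d, p d * apExpect p (fun A => TSP c ((insert d A).erase d)) := by
        have hsum : ∀ A : Finset V, ∑ d ∈ A, TSP c (A.erase d) =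
            ∑ d, if d ∈ A then TSP c (A.erase d) else 0 := fun A => (Fintype.sum_ite_mem A _).symm
        simp_rw [apExpect_add, apExpect_const_mul, hsum, apExpect_sum, apExpect_ite_mem, E]
    _ ≤ 2 * E + 2 * ∑ d, p d * E := by
        have := sum_le_sum fun d (_ : d ∈ univ) => mul_le_mul_of_nonneg_left (herase d) (hp0 d)
        linarith
    _ = 2 * (1 + ∑ v, p v) * E := by rw [← sum_mul]; ring

end Main

theorem statement8_general {V : Type*} [Fintype V] [DecidableEq V]
    (c : V → V → ℝ) (p : V → ℝ)
    (hc0 : ∀ x y, 0 ≤ c x y)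
    (htri : ∀ x y z, c x z ≤ c x y + c y z)
    (hp0 : ∀ v, 0 ≤ p v) (hp1 : ∀ v, p v ≤ 1)
    (hpV : 0 < ∑ v, p v) :
    ∃ d : V,
      (∀ T : List V, IsTour Finset.univ T →
        apExpect p (fun A => cycCost c (shortcut T A)) ≤
          apExpect (Function.update p d 1) (fun A => cycCost c (shortcut T A))) ∧
      apExpect (Function.update p d 1) (fun A => TSP c A) ≤
        2 * (1 + 1 / (∑ v, p v)) * apExpect p (fun A => TSP c A) := by
  obtain ⟨d, -, hd⟩ := exists_le_of_sum_mul_le (M := 2 * (1 + 1 / ∑ v, p v) * apExpect p (TSP c))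
    (fun d _ => hp0 d) hpV <| (sum_mul_apExpect_update_one_TSP_le hc0 htri hp0 hp1).trans_eq <| by
      field_simp
      ring
  exact ⟨d, fun T _ => apExpect_le_apExpect_update_one hp0 hp1 d
    (cycCost_shortcut_monotone hc0 htri T), hd⟩

/-- there is a vertex `d` such that raising its activation probability to `1`
(i) never decreases the expected short-cut cost of any tour, and (ii) increases the expected
cost of an optimal a posteriori tour by a factor of at most `2·(1 + 1/p(V))`. -/
theorem statement8 {V : Type*} [Fintype V] [DecidableEq V]
    (c : V → V → ℝ) (p : V → ℝ)
    (hc0 : ∀ x y, 0 ≤ c x y)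
    (hcrefl : ∀ v, c v v = 0)
    (htri : ∀ x y z, c x z ≤ c x y + c y z)
    (hp0 : ∀ v, 0 ≤ p v) (hp1 : ∀ v, p v ≤ 1)
    (hpV : 0 < ∑ v, p v) :
    ∃ d : V,
      (∀ T : List V, IsTour Finset.univ T →
        apExpect p (fun A => cycCost c (shortcut T A)) ≤
          apExpect (Function.update p d 1) (fun A => cycCost c (shortcut T A))) ∧
      apExpect (Function.update p d 1) (fun A => TSP c A) ≤
        2 * (1 + 1 / (∑ v, p v)) * apExpect p (fun A => TSP c A) :=
  statement8_general c p hc0 htri hp0 hp1 hpV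

end
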